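/- arXiv:1903.06642 — 5 statements merged into one kernel-verified Lean document; each statement's English description precedes it below -/
import Mathlib

section
/- Let n ∈ ℕ, let f_0, ..., f_n : ℝ → ℝ be differentiable at x ∈ ℝ, set K = Σ f_k(x)², K01 = Σ f_k(x)f_k'(x), K11 = Σ f_k'(x)², and assume K > 0 and K·K11 − K01² > 0. Let η_0, ..., η_n be real random variables on a probability space, define g = Σ_{k=0}^n μ_k η_k and h = Σ_{k=0}^n λ_k η_k with μ_k = f_k(x)/√K and λ_k = (K f_k'(x) − K01 f_k(x))/√(K(K11·K − K01²)), and define P = Σ_{k=0}^n η_k f_k(x) and P' = Σ_{k=0}^n η_k f_k'(x). If D̂ : ℝ² → ℝ≥0 is a probability density of the random vector (g, h) with respect to Lebesgue measure on ℝ², then the function D(ξ, η) = (K·K11 − K01²)^{−1/2} · D̂( ξ/√K , (K·η − K01·ξ)/√(K(K·K11 − K01²)) ) is a probability density of the random vector (P, P') with respect to Lebesgue measure on ℝ². -/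
open Finset MeasureTheory ENNReal

/-! The random vector `(P, P')` is the image of `(g, h)` under the lower-triangular linear map
`(u, v) ↦ (√K u, (K01 u + √(K K11 - K01²) v) / √K)`, whose determinant is `√(K K11 - K01²)`;
the density then transforms by the linear change of variables formula for Lebesgue measure. -/

theorem MeasurableEquiv.map_withDensity_comp {α β : Type*} [MeasurableSpace α]
    [MeasurableSpace β] (e : α ≃ᵐ β) (μ : Measure α) (f : β → ℝ≥0∞) :
    (μ.withDensity (f ∘ e)).map e = (μ.map e).withDensity f := by
  ext s hs
  rw [e.map_apply, withDensity_apply _ (e.measurable hs), withDensity_apply _ hs,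
    Measure.restrict_map e.measurable hs, lintegral_map_equiv, Function.comp_def]

theorem map_withDensity_linearEquiv {E : Type*} [NormedAddCommGroup E] [NormedSpace ℝ E]
    [MeasurableSpace E] [BorelSpace E] [FiniteDimensional ℝ E] (μ : Measure E)
    [μ.IsAddHaarMeasure] (e : E ≃ₗ[ℝ] E) (D : E → ℝ≥0∞) :
    (μ.withDensity D).map e = μ.withDensity fun y =>
      ENNReal.ofReal |(LinearMap.det (e : E →ₗ[ℝ] E))⁻¹| * D (e.symm y) := by
  let e' : E ≃ᵐ E := e.toContinuousLinearEquiv.toHomeomorph.toMeasurableEquiv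
  have he' : ⇑e' = e := rfl
  have hD : D = (fun y => D (e.symm y)) ∘ e' := by ext; simp [he']
  nth_rw 1 [hD]
  rw [← he', e'.map_withDensity_comp, he', ← LinearEquiv.coe_coe,
    Measure.map_linearMap_addHaar_eq_smul_addHaar μ e.isUnit_det'.ne_zero,
    withDensity_smul_measure, ← withDensity_smul' _ _ ofReal_ne_top]
  rfl

theorem map_withDensity_lowerTriangular {α β γ : ℝ} (hα : α ≠ 0) (hγ : γ ≠ 0)
    (D : ℝ × ℝ → ℝ≥0∞) :
    (volume.withDensity D).map (fun p : ℝ × ℝ => (α * p.1, β * p.1 + γ * p.2)) =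
      volume.withDensity fun p =>
        ENNReal.ofReal |α * γ|⁻¹ * D (p.1 / α, (p.2 - β * p.1 / α) / γ) := by
  set T := Matrix.toLin (Module.Basis.finTwoProd ℝ) (Module.Basis.finTwoProd ℝ) !![α, 0; β, γ]
  have hdet : LinearMap.det T = α * γ := by
    rw [LinearMap.det_toLin, Matrix.det_fin_two_of]; ring
  let e := T.equivOfDetNeZero (hdet ▸ mul_ne_zero hα hγ)
  have he : ⇑e = fun p : ℝ × ℝ => (α * p.1, β * p.1 + γ * p.2) := by
    ext p <;> simp [e, T, Matrix.toLin_finTwoProd_apply]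
  have he_symm (p : ℝ × ℝ) : e.symm p = (p.1 / α, (p.2 - β * p.1 / α) / γ) := by
    rw [e.symm_apply_eq, he]
    ext
    · field_simp
    · field_simp; ring
  rw [← he, map_withDensity_linearEquiv]
  simp_rw [he_symm]
  rw [LinearEquiv.coe_ofIsUnitDet, hdet, abs_inv]

theorem stmt_1_general (n : ℕ) (f : ℕ → ℝ → ℝ) (x : ℝ)
    (K K01 K11 : ℝ)
    (hKpos : 0 < K) (hpos : 0 < K * K11 - K01 ^ 2)
    (μ lam : ℕ → ℝ)
    (hμ : ∀ k, μ k = f k x / Real.sqrt K)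
    (hlam : ∀ k, lam k =
      (K * deriv (f k) x - K01 * f k x) / Real.sqrt (K * (K11 * K - K01 ^ 2)))
    (Ω : Type*) [MeasureSpace Ω] (ℙ : Measure Ω)
    (η : ℕ → Ω → ℝ) (hηmeas : ∀ k, Measurable (η k))
    (g h : Ω → ℝ)
    (hg : g = fun ω => ∑ k ∈ Finset.range (n + 1), μ k * η k ω)
    (hh : h = fun ω => ∑ k ∈ Finset.range (n + 1), lam k * η k ω)
    (P P' : Ω → ℝ)
    (hP : P = fun ω => ∑ k ∈ Finset.range (n + 1), η k ω * f k x)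
    (hP' : P' = fun ω => ∑ k ∈ Finset.range (n + 1), η k ω * deriv (f k) x)
    (Dh : ℝ × ℝ → ℝ)
    (hdens : Measure.map (fun ω => (g ω, h ω)) ℙ =
      volume.withDensity (fun p => ENNReal.ofReal (Dh p))) :
    Measure.map (fun ω => (P ω, P' ω)) ℙ =
      volume.withDensity (fun p => ENNReal.ofReal
        ((K * K11 - K01 ^ 2) ^ (-(1 : ℝ) / 2) *
          Dh (p.1 / Real.sqrt K,
             (K * p.2 - K01 * p.1) / Real.sqrt (K * (K * K11 - K01 ^ 2))))) := by
  set a := √K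
  set d := √(K * K11 - K01 ^ 2)
  have ha : a ≠ 0 := (Real.sqrt_pos.mpr hKpos).ne'
  have haa : a ^ 2 = K := Real.sq_sqrt hKpos.le
  have hd : 0 < d := Real.sqrt_pos.mpr hpos
  have had : √(K * (K * K11 - K01 ^ 2)) = a * d := Real.sqrt_mul hKpos.le _
  have hP_eq (ω : Ω) : P ω = a * g ω := by
    simp only [hP, hg, hμ, mul_sum]
    exact sum_congr rfl fun k _ => by field_simp
  have hP'_eq (ω : Ω) : P' ω = K01 / a * g ω + d / a * h ω := by
    simp only [hP', hg, hh, hμ, hlam, mul_sum, ← sum_add_distrib, mul_comm K11 K, had]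
    refine sum_congr rfl fun k _ => ?_
    field_simp
    rw [haa]
    ring
  have hgh : Measurable fun ω => (g ω, h ω) := by
    subst hg hh
    fun_prop
  have hPP' : (fun ω => (P ω, P' ω)) =
      (fun p : ℝ × ℝ => (a * p.1, K01 / a * p.1 + d / a * p.2)) ∘ fun ω => (g ω, h ω) := by
    ext ω <;> simp [hP_eq, hP'_eq]
  have hexp : (K * K11 - K01 ^ 2) ^ (-(1 : ℝ) / 2) = |a * (d / a)|⁻¹ := by
    rw [mul_div_cancel₀ _ ha, abs_of_pos hd, neg_div, Real.rpow_neg hpos.le, ← Real.sqrt_eq_rpow]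
  rw [hPP', ← Measure.map_map (by fun_prop) hgh, hdens,
    map_withDensity_lowerTriangular ha (div_ne_zero hd.ne' ha)]
  congr with p
  rw [hexp, had, ENNReal.ofReal_mul (by positivity)]
  congr 4
  field_simp
  rw [haa]

theorem stmt_1 (n : ℕ) (f : ℕ → ℝ → ℝ) (x : ℝ)
    (hf : ∀ k ≤ n, DifferentiableAt ℝ (f k) x)
    (K K01 K11 : ℝ)
    (hK : K = ∑ k ∈ Finset.range (n + 1), (f k x) ^ 2)
    (hK01 : K01 = ∑ k ∈ Finset.range (n + 1), f k x * deriv (f k) x)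
    (hK11 : K11 = ∑ k ∈ Finset.range (n + 1), (deriv (f k) x) ^ 2)
    (hKpos : 0 < K) (hpos : 0 < K * K11 - K01 ^ 2)
    (μ lam : ℕ → ℝ)
    (hμ : ∀ k, μ k = f k x / Real.sqrt K)
    (hlam : ∀ k, lam k =
      (K * deriv (f k) x - K01 * f k x) / Real.sqrt (K * (K11 * K - K01 ^ 2)))
    (Ω : Type*) [MeasureSpace Ω] (ℙ : Measure Ω) [IsProbabilityMeasure ℙ]
    (η : ℕ → Ω → ℝ) (hηmeas : ∀ k, Measurable (η k))
    (g h : Ω → ℝ)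
    (hg : g = fun ω => ∑ k ∈ Finset.range (n + 1), μ k * η k ω)
    (hh : h = fun ω => ∑ k ∈ Finset.range (n + 1), lam k * η k ω)
    (P P' : Ω → ℝ)
    (hP : P = fun ω => ∑ k ∈ Finset.range (n + 1), η k ω * f k x)
    (hP' : P' = fun ω => ∑ k ∈ Finset.range (n + 1), η k ω * deriv (f k) x)
    (Dh : ℝ × ℝ → ℝ) (hDhmeas : Measurable Dh) (hDhnonneg : ∀ p, 0 ≤ Dh p)
    (hdens : Measure.map (fun ω => (g ω, h ω)) ℙ =
      volume.withDensity (fun p => ENNReal.ofReal (Dh p))) :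
    Measure.map (fun ω => (P ω, P' ω)) ℙ =
      volume.withDensity (fun p => ENNReal.ofReal
        ((K * K11 - K01 ^ 2) ^ (-(1 : ℝ) / 2) *
          Dh (p.1 / Real.sqrt K,
             (K * p.2 - K01 * p.1) / Real.sqrt (K * (K * K11 - K01 ^ 2))))) :=
  stmt_1_general n f x K K01 K11 hKpos hpos μ lam hμ hlam Ω ℙ η hηmeas g h hg hh P P' hP hP' Dh
    hdens
end

section
/- Let a > 0, q ≥ 1, and let φ : ℝ → ℂ satisfy |φ(s)| ≤ (1 + a s²)^{−q} for all s ∈ ℝ. Let ω_0, ..., ω_n ∈ ℝ and set r² = Σ_{k=0}^n ω_k². Suppose M_1, ..., M_T (with T ≥ 1) is a partition of the index set {0, 1, ..., n} such that Σ_{k ∈ M_j} ω_k² ≥ r²/T for every j = 1, ..., T. Then ∏_{k=0}^n |φ(ω_k)| ≤ (1 + (a/T) r²)^{−Tq}. -/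
open Finset

/-! Bound each block of the partition separately: since `∏ (1 + xₖ) ≥ 1 + ∑ xₖ` for `xₖ ≥ 0`, the
block `Mⱼ` contributes at most `(1 + a ∑_{k ∈ Mⱼ} ωₖ²)^{-q} ≤ (1 + a r²/T)^{-q}`, and there are `T`
blocks. -/

theorem Finset.one_add_sum_le_prod_one_add {ι R : Type*} [CommSemiring R] [PartialOrder R]
    [IsOrderedRing R] (s : Finset ι) {f : ι → R} (hf : ∀ i ∈ s, 0 ≤ f i) :
    1 + ∑ i ∈ s, f i ≤ ∏ i ∈ s, (1 + f i) := by
  induction s using Finset.cons_induction with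
  | empty => simp
  | cons i s hi ih =>
    rw [sum_cons, prod_cons]
    have hfi : 0 ≤ f i := hf i (mem_cons_self i s)
    have hfs : ∀ j ∈ s, 0 ≤ f j := fun j hj ↦ hf j (mem_cons_of_mem hj)
    calc 1 + (f i + ∑ j ∈ s, f j)
        ≤ 1 + (f i + ∑ j ∈ s, f j) + f i * ∑ j ∈ s, f j :=
          le_add_of_nonneg_right (mul_nonneg hfi (sum_nonneg hfs))
      _ = (1 + f i) * (1 + ∑ j ∈ s, f j) := by ring
      _ ≤ (1 + f i) * ∏ j ∈ s, (1 + f j) :=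
          mul_le_mul_of_nonneg_left (ih hfs) (add_nonneg zero_le_one hfi)

theorem Finset.prod_norm_le_one_add_mul_sum_sq_rpow {ι E : Type*} [SeminormedAddCommGroup E]
    {a q : ℝ} (ha : 0 ≤ a) (hq : 0 ≤ q) {φ : ℝ → E}
    (hφ : ∀ s : ℝ, ‖φ s‖ ≤ (1 + a * s ^ 2) ^ (-q)) (s : Finset ι) (ω : ι → ℝ) :
    ∏ k ∈ s, ‖φ (ω k)‖ ≤ (1 + a * ∑ k ∈ s, ω k ^ 2) ^ (-q) := by
  have hpos : ∀ k ∈ s, 0 ≤ 1 + a * ω k ^ 2 := fun k _ ↦ by positivity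
  calc ∏ k ∈ s, ‖φ (ω k)‖
      ≤ ∏ k ∈ s, (1 + a * ω k ^ 2) ^ (-q) :=
        prod_le_prod (fun k _ ↦ norm_nonneg _) (fun k _ ↦ hφ (ω k))
    _ = (∏ k ∈ s, (1 + a * ω k ^ 2)) ^ (-q) := Real.finsetProd_rpow s _ hpos _
    _ ≤ (1 + a * ∑ k ∈ s, ω k ^ 2) ^ (-q) := by
        refine Real.rpow_le_rpow_of_nonpos (by positivity) ?_ (neg_nonpos.mpr hq)
        rw [mul_sum]
        exact one_add_sum_le_prod_one_add s fun k _ ↦ by positivity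

theorem stmt_5_general (a q : ℝ) (ha : 0 < a) (hq : 1 ≤ q)
    (φ : ℝ → ℂ)
    (hφ : ∀ s : ℝ, ‖φ s‖ ≤ (1 + a * s ^ 2) ^ (-q))
    (n : ℕ) (ω : ℕ → ℝ) (r : ℝ)
    (T : ℕ) (M : Fin T → Finset ℕ)
    (hdisj : ∀ i j, i ≠ j → Disjoint (M i) (M j))
    (hcover : (Finset.univ : Finset (Fin T)).biUnion M = Finset.range (n + 1))
    (hlow : ∀ j, (r ^ 2) / T ≤ ∑ k ∈ M j, ω k ^ 2) :
    (∏ k ∈ Finset.range (n + 1), ‖φ (ω k)‖) ≤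
      (1 + (a / T) * r ^ 2) ^ (-(T * q)) := by
  have hblock (j : Fin T) : 1 + (a / T) * r ^ 2 ≤ 1 + a * ∑ k ∈ M j, ω k ^ 2 := by
    rw [div_mul_eq_mul_div, mul_div_assoc]
    gcongr
    exact hlow j
  rw [← hcover, prod_biUnion fun i _ j _ hij ↦ hdisj i j hij]
  calc ∏ j, ∏ k ∈ M j, ‖φ (ω k)‖
      ≤ ∏ _j : Fin T, (1 + (a / T) * r ^ 2) ^ (-q) :=
        prod_le_prod (fun j _ ↦ prod_nonneg fun k _ ↦ norm_nonneg _) fun j _ ↦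
          (prod_norm_le_one_add_mul_sum_sq_rpow ha.le (by linarith) hφ (M j) ω).trans
            (Real.rpow_le_rpow_of_nonpos (by positivity) (hblock j) (by linarith))
    _ = (1 + (a / T) * r ^ 2) ^ (-(T * q)) := by
        rw [prod_const, card_univ, Fintype.card_fin, ← Real.rpow_natCast,
          ← Real.rpow_mul (by positivity)]
        ring_nf

theorem stmt_5 (a q : ℝ) (ha : 0 < a) (hq : 1 ≤ q)
    (φ : ℝ → ℂ)
    (hφ : ∀ s : ℝ, ‖φ s‖ ≤ (1 + a * s ^ 2) ^ (-q))
    (n : ℕ) (ω : ℕ → ℝ) (r : ℝ)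
    (hr : r ^ 2 = ∑ k ∈ Finset.range (n + 1), ω k ^ 2)
    (T : ℕ) (hT : 1 ≤ T) (M : Fin T → Finset ℕ)
    (hdisj : ∀ i j, i ≠ j → Disjoint (M i) (M j))
    (hcover : (Finset.univ : Finset (Fin T)).biUnion M = Finset.range (n + 1))
    (hlow : ∀ j, (r ^ 2) / T ≤ ∑ k ∈ M j, ω k ^ 2) :
    (∏ k ∈ Finset.range (n + 1), ‖φ (ω k)‖) ≤
      (1 + (a / T) * r ^ 2) ^ (-(T * q)) :=
  stmt_5_general a q ha hq φ hφ n ω r T M hdisj hcover hlow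
end

section
/- Let φ : ℝ → ℂ be three times differentiable with |φ'(s)| ≤ C₂|s|, |φ''(s)| ≤ C₂, and |φ'''(s)| ≤ C₃ for all s ∈ ℝ, where C₂, C₃ > 0. Let λ_0, ..., λ_n ∈ ℝ with Σ_{k=0}^n λ_k² = 1, let ω_0, ..., ω_n ∈ ℝ with Σ_{k=0}^n ω_k² = r², and suppose B ≥ 0 is such that ∏_{l ≠ k} |φ(ω_l)| ≤ B for every k and ∏_{l ∉ {i,k}} |φ(ω_l)| ≤ B for every pair i ≠ k. Then | Σ_{k=0}^n λ_k³ φ'''(ω_k) ∏_{l ≠ k} φ(ω_l) + 2 Σ_{k=0}^n Σ_{i ≠ k} λ_i² λ_k φ''(ω_i) φ'(ω_k) ∏_{l ∉ {i,k}} φ(ω_l) | ≤ (C₃ + 2 C₂² r) · B. -/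
open Finset

/-
Expand with the triangle inequality. The weights with `∑ λ_k² = 1` satisfy `|λ_k| ≤ 1`, so
`|λ_k|³ ≤ λ_k²` and the first sum is at most `C₃ B`. In the double sum the factor `λ_i²` sums to at
most `1` over `i`, and `|φ'(ω_k)| ≤ C₂ |ω_k|`, so it is at most `C₂² B ∑ |λ_k| |ω_k| ≤ C₂² B r` by
Cauchy–Schwarz.
-/

section UnitWeights

variable {ι 𝕜 : Type*} [RCLike 𝕜] {s : Finset ι} {lam : ι → ℝ}

lemma abs_le_one_of_sum_sq_eq_one (hlam : ∑ k ∈ s, lam k ^ 2 = 1) {k : ι} (hk : k ∈ s) :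
    |lam k| ≤ 1 := by
  have : lam k ^ 2 ≤ 1 := hlam ▸ single_le_sum (fun i _ => sq_nonneg (lam i)) hk
  exact (sq_le_one_iff_abs_le_one _).mp this

lemma abs_pow_three_le_sq_of_sum_sq_eq_one (hlam : ∑ k ∈ s, lam k ^ 2 = 1) {k : ι}
    (hk : k ∈ s) : |lam k| ^ 3 ≤ lam k ^ 2 := by
  rw [← sq_abs (lam k), pow_succ]
  exact mul_le_of_le_one_right (sq_nonneg _) (abs_le_one_of_sum_sq_eq_one hlam hk)

lemma sum_abs_mul_abs_le_of_sum_sq_eq_one (hlam : ∑ k ∈ s, lam k ^ 2 = 1) {ω : ι → ℝ} {r : ℝ}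
    (hr : 0 ≤ r) (hω : ∑ k ∈ s, ω k ^ 2 = r ^ 2) : ∑ k ∈ s, |lam k| * |ω k| ≤ r := by
  have h := sum_mul_sq_le_sq_mul_sq s (fun k => |lam k|) (fun k => |ω k|)
  simp only [sq_abs, hlam, hω, one_mul] at h
  exact abs_le_of_sq_le_sq' h hr |>.2

lemma norm_sum_ofReal_pow_three_mul_le (hlam : ∑ k ∈ s, lam k ^ 2 = 1) {z : ι → 𝕜} {M : ℝ}
    (hz : ∀ k ∈ s, ‖z k‖ ≤ M) : ‖∑ k ∈ s, (lam k : 𝕜) ^ 3 * z k‖ ≤ M := by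
  calc ‖∑ k ∈ s, (lam k : 𝕜) ^ 3 * z k‖
      ≤ ∑ k ∈ s, |lam k| ^ 3 * ‖z k‖ := by
        refine norm_sum_le_of_le s fun k _ => ?_
        rw [norm_mul, norm_pow, RCLike.norm_ofReal]
    _ ≤ ∑ k ∈ s, lam k ^ 2 * M := by
        gcongr with k hk
        · exact abs_pow_three_le_sq_of_sum_sq_eq_one hlam hk
        · exact hz k hk
    _ = M := by rw [← sum_mul, hlam, one_mul]

lemma norm_sum_sum_erase_ofReal_sq_mul_le [DecidableEq ι] (hlam : ∑ k ∈ s, lam k ^ 2 = 1)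
    {w : ι → ι → 𝕜} {M : ι → ℝ} (hM : ∀ k ∈ s, 0 ≤ M k)
    (hw : ∀ k ∈ s, ∀ i ∈ s, i ≠ k → ‖w i k‖ ≤ M k) :
    ‖∑ k ∈ s, ∑ i ∈ s.erase k, ((lam i : 𝕜) ^ 2 * lam k) * w i k‖ ≤
      ∑ k ∈ s, |lam k| * M k := by
  refine norm_sum_le_of_le s fun k hk => ?_
  calc ‖∑ i ∈ s.erase k, ((lam i : 𝕜) ^ 2 * lam k) * w i k‖
      ≤ ∑ i ∈ s.erase k, lam i ^ 2 * (|lam k| * M k) := by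
        refine norm_sum_le_of_le _ fun i hi => ?_
        rw [norm_mul, norm_mul, norm_pow, RCLike.norm_ofReal, RCLike.norm_ofReal, sq_abs,
          mul_assoc]
        gcongr
        exact hw k hk i (mem_of_mem_erase hi) (ne_of_mem_erase hi)
    _ ≤ ∑ i ∈ s, lam i ^ 2 * (|lam k| * M k) :=
        sum_le_sum_of_subset_of_nonneg (erase_subset _ _) fun i _ _ =>
          mul_nonneg (sq_nonneg _) (mul_nonneg (abs_nonneg _) (hM k hk))
    _ = |lam k| * M k := by rw [← sum_mul, hlam, one_mul]

end UnitWeights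

theorem stmt_7_general (C₂ C₃ : ℝ)
    (φ : ℝ → ℂ)
    (hφ1 : ∀ s : ℝ, ‖deriv φ s‖ ≤ C₂ * |s|)
    (hφ2 : ∀ s : ℝ, ‖deriv (deriv φ) s‖ ≤ C₂)
    (hφ3 : ∀ s : ℝ, ‖deriv (deriv (deriv φ)) s‖ ≤ C₃)
    (n : ℕ) (lam ω : ℕ → ℝ)
    (hlam : ∑ k ∈ Finset.range (n + 1), lam k ^ 2 = 1)
    (r : ℝ) (hr : 0 ≤ r)
    (hω : ∑ k ∈ Finset.range (n + 1), ω k ^ 2 = r ^ 2)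
    (B : ℝ) (hB : 0 ≤ B)
    (hprod1 : ∀ k ∈ Finset.range (n + 1),
      (∏ l ∈ (Finset.range (n + 1)).erase k, ‖φ (ω l)‖) ≤ B)
    (hprod2 : ∀ k ∈ Finset.range (n + 1), ∀ i ∈ Finset.range (n + 1), i ≠ k →
      (∏ l ∈ ((Finset.range (n + 1)).erase k).erase i, ‖φ (ω l)‖) ≤ B) :
    ‖
      (∑ k ∈ Finset.range (n + 1), (lam k : ℂ) ^ 3 * deriv (deriv (deriv φ)) (ω k) *
          ∏ l ∈ (Finset.range (n + 1)).erase k, φ (ω l)) +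
      2 * ∑ k ∈ Finset.range (n + 1), ∑ i ∈ (Finset.range (n + 1)).erase k,
          ((lam i : ℂ) ^ 2 * lam k) * deriv (deriv φ) (ω i) * deriv φ (ω k) *
            ∏ l ∈ ((Finset.range (n + 1)).erase k).erase i, φ (ω l)‖ ≤
      (C₃ + 2 * C₂ ^ 2 * r) * B := by
  have hC₂ : 0 ≤ C₂ := (norm_nonneg _).trans (hφ2 0)
  have hfirst := norm_sum_ofReal_pow_three_mul_le (𝕜 := ℂ) hlam fun k hk =>
    norm_mul_le_of_le (hφ3 (ω k)) ((norm_prod _ _).trans_le (hprod1 k hk))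
  have hsecond := norm_sum_sum_erase_ofReal_sq_mul_le (𝕜 := ℂ) hlam
    (M := fun k => C₂ * (C₂ * |ω k| * B)) (fun k _ => by positivity) fun k hk i hi hik =>
      norm_mul_le_of_le (hφ2 (ω i))
        (norm_mul_le_of_le (hφ1 (ω k)) ((norm_prod _ _).trans_le (hprod2 k hk i hi hik)))
  have hCS := sum_abs_mul_abs_le_of_sum_sq_eq_one hlam hr hω
  simp only [mul_assoc] at hfirst hsecond ⊢
  calc _ ≤ C₃ * B + 2 * ∑ k ∈ range (n + 1), |lam k| * (C₂ * (C₂ * (|ω k| * B))) := by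
        grw [norm_add_le, norm_mul, Complex.norm_two]
        gcongr
        exacts [hfirst, hsecond]
    _ = C₃ * B + 2 * (C₂ ^ 2 * B * ∑ k ∈ range (n + 1), |lam k| * |ω k|) := by
        rw [mul_sum (s := range (n + 1)) (a := C₂ ^ 2 * B)]
        congr 2
        exact sum_congr rfl fun k _ => by ring
    _ ≤ C₃ * B + 2 * (C₂ ^ 2 * B * r) := by gcongr
    _ = (C₃ + 2 * (C₂ ^ 2 * r)) * B := by ring

theorem stmt_7 (C₂ C₃ : ℝ) (hC₂ : 0 < C₂) (hC₃ : 0 < C₃)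
    (φ : ℝ → ℂ) (hdiff : Differentiable ℝ φ)
    (hdiff2 : Differentiable ℝ (deriv φ))
    (hdiff3 : Differentiable ℝ (deriv (deriv φ)))
    (hφ1 : ∀ s : ℝ, ‖deriv φ s‖ ≤ C₂ * |s|)
    (hφ2 : ∀ s : ℝ, ‖deriv (deriv φ) s‖ ≤ C₂)
    (hφ3 : ∀ s : ℝ, ‖deriv (deriv (deriv φ)) s‖ ≤ C₃)
    (n : ℕ) (lam ω : ℕ → ℝ)
    (hlam : ∑ k ∈ Finset.range (n + 1), lam k ^ 2 = 1)
    (r : ℝ) (hr : 0 ≤ r)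
    (hω : ∑ k ∈ Finset.range (n + 1), ω k ^ 2 = r ^ 2)
    (B : ℝ) (hB : 0 ≤ B)
    (hprod1 : ∀ k ∈ Finset.range (n + 1),
      (∏ l ∈ (Finset.range (n + 1)).erase k, ‖φ (ω l)‖) ≤ B)
    (hprod2 : ∀ k ∈ Finset.range (n + 1), ∀ i ∈ Finset.range (n + 1), i ≠ k →
      (∏ l ∈ ((Finset.range (n + 1)).erase k).erase i, ‖φ (ω l)‖) ≤ B) :
    ‖
      (∑ k ∈ Finset.range (n + 1), (lam k : ℂ) ^ 3 * deriv (deriv (deriv φ)) (ω k) *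
          ∏ l ∈ (Finset.range (n + 1)).erase k, φ (ω l)) +
      2 * ∑ k ∈ Finset.range (n + 1), ∑ i ∈ (Finset.range (n + 1)).erase k,
          ((lam i : ℂ) ^ 2 * lam k) * deriv (deriv φ) (ω i) * deriv φ (ω k) *
            ∏ l ∈ ((Finset.range (n + 1)).erase k).erase i, φ (ω l)‖ ≤
      (C₃ + 2 * C₂ ^ 2 * r) * B :=
  stmt_7_general C₂ C₃ φ hφ1 hφ2 hφ3 n lam ω hlam r hr hω B hB hprod1 hprod2
end

section
/- The function x ↦ x^{3/2} Γ(x − 3/2)/Γ(x) is decreasing (antitone) on the interval [2, ∞), and its value at x = 2 is 2√(2π). In particular, x^{3/2} Γ(x − 3/2)/Γ(x) ≤ 2√(2π) for all x ≥ 2. -/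
/-!
Writing `F(x) = x^a Γ(x - a) / Γ(x)` for `0 ≤ a < x`, the Euler–Gauss limit for `log Γ`
(Mathlib's `logGammaSeq`) together with a telescoping sum gives
`log F(x) = ∑ₘ φ(x + m)`, where `φ(s) = (1 + a) log s - log (s - a) - a log (s + 1)`.
Each `φ` has derivative `-a(1 + a) / (s (s - a) (s + 1)) ≤ 0`, so every partial sum is antitone
and so is the limit. For `a = 3/2` the value at `2` is `2^{3/2} Γ(1/2) = 2√(2π)`.
-/


open Real Filter Topology

noncomputable def logGammaRatioTerm (a s : ℝ) : ℝ :=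
  (1 + a) * log s - log (s - a) - a * log (s + 1)

lemma hasDerivAt_logGammaRatioTerm {a s : ℝ} (ha : 0 ≤ a) (hs : a < s) :
    HasDerivAt (logGammaRatioTerm a) (-(a * (1 + a)) / (s * (s - a) * (s + 1))) s := by
  have h₀ : s ≠ 0 := by linarith
  have h₁ : s - a ≠ 0 := by linarith
  have h₂ : s + 1 ≠ 0 := by linarith
  have hd := (((hasDerivAt_id s).log h₀).const_mul (1 + a)).sub
    (((hasDerivAt_id s).sub_const a).log h₁) |>.sub
    ((((hasDerivAt_id s).add_const 1).log h₂).const_mul a)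
  refine hd.congr_deriv ?_
  simp only [id]
  field_simp
  ring

lemma antitoneOn_logGammaRatioTerm {a : ℝ} (ha : 0 ≤ a) :
    AntitoneOn (logGammaRatioTerm a) (Set.Ioi a) := by
  refine antitoneOn_of_hasDerivWithinAt_nonpos (convex_Ioi a)
    (f' := fun s => -(a * (1 + a)) / (s * (s - a) * (s + 1)))
    (fun s hs => (hasDerivAt_logGammaRatioTerm ha hs).continuousAt.continuousWithinAt)
    (fun s hs => ?_) (fun s hs => ?_)
  · rw [interior_Ioi] at hs
    exact (hasDerivAt_logGammaRatioTerm ha hs).hasDerivWithinAt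
  · rw [interior_Ioi, Set.mem_Ioi] at hs
    have : 0 < s := by linarith
    have : 0 < s - a := by linarith
    exact div_nonpos_of_nonpos_of_nonneg (by nlinarith) (by positivity)

lemma sum_logGammaRatioTerm (a t : ℝ) (n : ℕ) :
    ∑ m ∈ Finset.range (n + 1), logGammaRatioTerm a (t + m) =
      BohrMollerup.logGammaSeq (t - a) n - BohrMollerup.logGammaSeq t n + a * log t
        - a * (log (n + (t + 1)) - log n) := by
  have telescope := Finset.sum_range_sub' (fun m : ℕ => log (t + m)) (n + 1)
  simp only [BohrMollerup.logGammaSeq, logGammaRatioTerm, Finset.sum_sub_distrib,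
    ← Finset.mul_sum, add_sub_right_comm t, Nat.cast_add, Nat.cast_one, Nat.cast_zero, add_zero,
    ← add_assoc] at telescope ⊢
  rw [show t + n + 1 = n + t + 1 by ring] at telescope
  linear_combination a * telescope

lemma tendsto_sum_logGammaRatioTerm {a t : ℝ} (ha : 0 ≤ a) (ht : a < t) :
    Tendsto (fun n : ℕ => ∑ m ∈ Finset.range (n + 1), logGammaRatioTerm a (t + m)) atTop
      (𝓝 (log (Gamma (t - a)) - log (Gamma t) + a * log t)) := by
  have hlog := (tendsto_log_comp_add_sub_log (t + 1)).comp tendsto_natCast_atTop_atTop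
  have := ((BohrMollerup.tendsto_log_gamma (sub_pos.2 ht)).sub
    (BohrMollerup.tendsto_log_gamma (by linarith : 0 < t))).add_const (a * log t) |>.sub
    (hlog.const_mul a)
  rw [mul_zero, sub_zero] at this
  simpa only [sum_logGammaRatioTerm, Function.comp_apply] using this

lemma log_rpow_mul_Gamma_sub_div_Gamma {a t : ℝ} (ht₀ : 0 < t) (ht : a < t) :
    log (t ^ a * Gamma (t - a) / Gamma t) = log (Gamma (t - a)) - log (Gamma t) + a * log t := by
  have hΓ := Gamma_pos_of_pos (sub_pos.2 ht)
  have hpow := rpow_pos_of_pos ht₀ a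
  rw [log_div (mul_pos hpow hΓ).ne' (Gamma_pos_of_pos ht₀).ne', log_mul hpow.ne' hΓ.ne',
    log_rpow ht₀]
  ring

theorem antitoneOn_rpow_mul_Gamma_sub_div_Gamma {a : ℝ} (ha : 0 ≤ a) :
    AntitoneOn (fun x : ℝ => x ^ a * Gamma (x - a) / Gamma x) (Set.Ioi a) := by
  intro x (hx : a < x) y (hy : a < y) hxy
  have pos {t : ℝ} (ht : a < t) : 0 < t ^ a * Gamma (t - a) / Gamma t := by
    have := Gamma_pos_of_pos (sub_pos.2 ht)
    have := Gamma_pos_of_pos (ha.trans_lt ht)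
    have := ha.trans_lt ht
    positivity
  rw [← log_le_log_iff (pos hy) (pos hx), log_rpow_mul_Gamma_sub_div_Gamma (by linarith) hx,
    log_rpow_mul_Gamma_sub_div_Gamma (by linarith) hy]
  refine le_of_tendsto_of_tendsto' (tendsto_sum_logGammaRatioTerm ha hy)
    (tendsto_sum_logGammaRatioTerm ha hx) fun n => Finset.sum_le_sum fun m _ => ?_
  have hm : (0 : ℝ) ≤ m := m.cast_nonneg
  exact antitoneOn_logGammaRatioTerm ha (show a < x + m by linarith)
    (show a < y + m by linarith) (by linarith)

theorem stmt_12 :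
    AntitoneOn (fun x : ℝ => x ^ ((3 : ℝ) / 2) * Real.Gamma (x - 3 / 2) / Real.Gamma x)
      (Set.Ici (2 : ℝ)) ∧
    (2 : ℝ) ^ ((3 : ℝ) / 2) * Real.Gamma (2 - 3 / 2) / Real.Gamma 2 =
      2 * Real.sqrt (2 * π) ∧
    ∀ x : ℝ, 2 ≤ x →
      x ^ ((3 : ℝ) / 2) * Real.Gamma (x - 3 / 2) / Real.Gamma x ≤
        2 * Real.sqrt (2 * π) := by
  have hanti := (antitoneOn_rpow_mul_Gamma_sub_div_Gamma (a := 3 / 2) (by norm_num)).mono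
    (Set.Ici_subset_Ioi.2 (by norm_num : (3 / 2 : ℝ) < 2))
  have hval : (2 : ℝ) ^ ((3 : ℝ) / 2) * Real.Gamma (2 - 3 / 2) / Real.Gamma 2 =
      2 * Real.sqrt (2 * π) := by
    rw [show (2 : ℝ) - 3 / 2 = 1 / 2 by norm_num, Gamma_one_half_eq, Gamma_two,
      sqrt_mul zero_le_two π, show (3 : ℝ) / 2 = 1 + 1 / 2 by norm_num,
      rpow_add two_pos, rpow_one, ← sqrt_eq_rpow]
    ring
  refine ⟨hanti, hval, fun x hx => ?_⟩
  rw [← hval]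
  exact hanti Set.self_mem_Ici hx hx
end

section
/- For k = 0, 1, 2, ..., let p_k(x) = √((k+1)/π) x^k, and for n ∈ ℕ and x ∈ ℝ define K_n(x) = Σ_{k=0}^n p_k(x)², K01_n(x) = Σ_{k=0}^n p_k(x) p_k'(x), K11_n(x) = Σ_{k=0}^n p_k'(x)², and 𝒦_n(x) = √(K11_n(x) K_n(x) − K01_n(x)²) / K_n(x). Then for every x ∈ ℝ with |x| < 1, the limit as n → ∞ of 𝒦_n(x) equals √2/(1 − x²). -/
open Finset Real Filter

noncomputable def bergPoly (k : ℕ) (x : ℝ) : ℝ :=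
  Real.sqrt ((k + 1) / π) * x ^ k

noncomputable def bergK (n : ℕ) (x : ℝ) : ℝ :=
  ∑ k ∈ Finset.range (n + 1), (bergPoly k x) ^ 2

noncomputable def bergK01 (n : ℕ) (x : ℝ) : ℝ :=
  ∑ k ∈ Finset.range (n + 1), bergPoly k x * deriv (bergPoly k) x

noncomputable def bergK11 (n : ℕ) (x : ℝ) : ℝ :=
  ∑ k ∈ Finset.range (n + 1), (deriv (bergPoly k) x) ^ 2

noncomputable def bergKcal (n : ℕ) (x : ℝ) : ℝ :=
  Real.sqrt (bergK11 n x * bergK n x - (bergK01 n x) ^ 2) / bergK n x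

/-!
With `t = x²`, the three kernels are partial sums of series `Σ q(k) tᵏ` with polynomial
coefficients `q`; writing `q` in the falling-factorial basis reduces them to derivatives of
the geometric series, so that for `|x| < 1`
`K_n → 1 / (π (1 - t)²)`, `K01_n → 2x / (π (1 - t)³)`, `K11_n → (2 + 4t) / (π (1 - t)⁴)`.
Hence `K11_n K_n - K01_n² → 2 / (π² (1 - t)⁶)` and `𝒦_n → √2 / (1 - t)`.
-/

theorem hasSum_descFactorial_mul_geometric {𝕜 : Type*} [NormedDivisionRing 𝕜] (k : ℕ) {r : 𝕜}
    (hr : ‖r‖ < 1) :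
    HasSum (fun n : ℕ => ((n + k).descFactorial k : 𝕜) * r ^ n)
      (k.factorial / (1 - r) ^ (k + 1)) := by
  have h := (hasSum_choose_mul_geometric_of_norm_lt_one k hr).mul_left (k.factorial : 𝕜)
  simp_rw [← mul_assoc, ← Nat.cast_mul, ← Nat.descFactorial_eq_factorial_mul_choose,
    mul_one_div] at h
  exact h

theorem HasSum.of_nat_add_one {G : Type*} [AddCommGroup G] [TopologicalSpace G]
    [IsTopologicalAddGroup G] {f : ℕ → G} {a : G} (h : HasSum (fun n => f (n + 1)) a)
    (h0 : f 0 = 0) : HasSum f a := by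
  simpa [h0] using (hasSum_nat_add_iff 1).mp h

theorem HasSum.tendsto_sum_range_succ {G : Type*} [AddCommMonoid G] [TopologicalSpace G]
    {f : ℕ → G} {a : G} (h : HasSum f a) :
    Tendsto (fun n => ∑ k ∈ range (n + 1), f k) atTop (nhds a) :=
  h.tendsto_sum_nat.comp (tendsto_add_atTop_nat 1)

theorem deriv_bergPoly (k : ℕ) (x : ℝ) :
    deriv (bergPoly k) x = Real.sqrt ((k + 1) / π) * (k * x ^ (k - 1)) := by
  change deriv (fun y => Real.sqrt ((k + 1) / π) * y ^ k) x = _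
  rw [deriv_const_mul_field, deriv_pow_field]

theorem sqrt_bergCoeff_sq (k : ℕ) : Real.sqrt ((k + 1) / π) ^ 2 = (k + 1) / π :=
  Real.sq_sqrt (by positivity)

theorem bergPoly_sq (k : ℕ) (x : ℝ) :
    bergPoly k x ^ 2 = π⁻¹ * (((k + 1).descFactorial 1 : ℝ) * (x ^ 2) ^ k) := by
  have hc := sqrt_bergCoeff_sq k
  simp only [bergPoly, Nat.descFactorial_one]
  push_cast
  linear_combination (x ^ 2) ^ k * hc

theorem bergPoly_mul_deriv_succ (j : ℕ) (x : ℝ) :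
    bergPoly (j + 1) x * deriv (bergPoly (j + 1)) x =
      x / π * (((j + 2).descFactorial 2 : ℝ) * (x ^ 2) ^ j) := by
  have hc := sqrt_bergCoeff_sq (j + 1)
  simp only [bergPoly, deriv_bergPoly, Nat.add_sub_cancel, Nat.descFactorial_succ,
    Nat.descFactorial_zero]
  push_cast at hc ⊢
  linear_combination (j + 1) * x * (x ^ 2) ^ j * hc

-- `(j + 1)² (j + 2) = (j + 3)(j + 2)(j + 1) - 2 (j + 2)(j + 1)`
theorem deriv_bergPoly_succ_sq (j : ℕ) (x : ℝ) :
    deriv (bergPoly (j + 1)) x ^ 2 = π⁻¹ * (((j + 3).descFactorial 3 : ℝ) * (x ^ 2) ^ j -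
      2 * (((j + 2).descFactorial 2 : ℝ) * (x ^ 2) ^ j)) := by
  have hc := sqrt_bergCoeff_sq (j + 1)
  simp only [deriv_bergPoly, Nat.add_sub_cancel, Nat.descFactorial_succ, Nat.descFactorial_zero]
  push_cast at hc ⊢
  linear_combination (j + 1) ^ 2 * (x ^ 2) ^ j * hc

theorem norm_sq_lt_one_of_abs_lt_one {x : ℝ} (hx : |x| < 1) : ‖x ^ 2‖ < 1 := by
  rwa [norm_pow, Real.norm_eq_abs, sq_abs, sq_lt_one_iff_abs_lt_one]

theorem hasSum_bergPoly_sq {x : ℝ} (hx : |x| < 1) :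
    HasSum (fun k => bergPoly k x ^ 2) (1 / (π * (1 - x ^ 2) ^ 2)) := by
  have h := (hasSum_descFactorial_mul_geometric 1
    (norm_sq_lt_one_of_abs_lt_one hx)).mul_left π⁻¹
  simp_rw [← bergPoly_sq] at h
  rwa [Nat.factorial_one, Nat.cast_one, ← div_eq_inv_mul, div_div, mul_comm] at h

theorem hasSum_bergPoly_mul_deriv {x : ℝ} (hx : |x| < 1) :
    HasSum (fun k => bergPoly k x * deriv (bergPoly k) x) (2 * x / (π * (1 - x ^ 2) ^ 3)) := by
  have h := (hasSum_descFactorial_mul_geometric 2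
    (norm_sq_lt_one_of_abs_lt_one hx)).mul_left (x / π)
  simp_rw [← bergPoly_mul_deriv_succ] at h
  have h' := HasSum.of_nat_add_one (f := fun k => bergPoly k x * deriv (bergPoly k) x) h
    (by simp [deriv_bergPoly])
  have e : x / π * ((Nat.factorial 2 : ℕ) / (1 - x ^ 2) ^ (2 + 1)) =
      2 * x / (π * (1 - x ^ 2) ^ 3) := by
    rw [div_mul_div_comm, Nat.factorial_two, Nat.cast_two, mul_comm x]
  rwa [e] at h'

theorem hasSum_deriv_bergPoly_sq {x : ℝ} (hx : |x| < 1) :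
    HasSum (fun k => deriv (bergPoly k) x ^ 2) ((2 + 4 * x ^ 2) / (π * (1 - x ^ 2) ^ 4)) := by
  have hx2 := norm_sq_lt_one_of_abs_lt_one hx
  have h := (((hasSum_descFactorial_mul_geometric 3 hx2).sub
    ((hasSum_descFactorial_mul_geometric 2 hx2).mul_left 2)).mul_left π⁻¹)
  simp_rw [← deriv_bergPoly_succ_sq] at h
  have h' := HasSum.of_nat_add_one (f := fun k => deriv (bergPoly k) x ^ 2) h
    (by simp [deriv_bergPoly])
  have e : π⁻¹ * ((Nat.factorial 3 : ℕ) / (1 - x ^ 2) ^ (3 + 1) -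
      2 * ((Nat.factorial 2 : ℕ) / (1 - x ^ 2) ^ (2 + 1))) =
      (2 + 4 * x ^ 2) / (π * (1 - x ^ 2) ^ 4) := by
    have hu : 1 - x ^ 2 ≠ 0 := (sub_pos.2 ((sq_lt_one_iff_abs_lt_one x).2 hx)).ne'
    norm_num [Nat.factorial]
    field_simp
    ring
  rwa [e] at h'

theorem stmt_17 (x : ℝ) (hx : |x| < 1) :
    Tendsto (fun n : ℕ => bergKcal n x) atTop (nhds (Real.sqrt 2 / (1 - x ^ 2))) := by
  have hu : 0 < 1 - x ^ 2 := sub_pos.2 ((sq_lt_one_iff_abs_lt_one x).2 hx)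
  have hK := (hasSum_bergPoly_sq hx).tendsto_sum_range_succ
  have hK01 := (hasSum_bergPoly_mul_deriv hx).tendsto_sum_range_succ
  have hK11 := (hasSum_deriv_bergPoly_sq hx).tendsto_sum_range_succ
  have hlim := ((hK11.mul hK).sub (hK01.pow 2)).sqrt.div hK (by positivity)
  have hdisc : (2 + 4 * x ^ 2) / (π * (1 - x ^ 2) ^ 4) * (1 / (π * (1 - x ^ 2) ^ 2)) -
      (2 * x / (π * (1 - x ^ 2) ^ 3)) ^ 2 = (Real.sqrt 2 / (π * (1 - x ^ 2) ^ 3)) ^ 2 := by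
    rw [div_pow (Real.sqrt 2), Real.sq_sqrt zero_le_two]
    field_simp
    ring
  have hval : Real.sqrt 2 / (π * (1 - x ^ 2) ^ 3) / (1 / (π * (1 - x ^ 2) ^ 2)) =
      Real.sqrt 2 / (1 - x ^ 2) := by
    field_simp
  rw [hdisc, Real.sqrt_sq (by positivity), hval] at hlim
  exact hlim
end
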